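/- Let Σ be a nonempty finite type and P : Set (ℕ → Σ) a boolean property. Then (P is safe or P is co-safe) if and only if there exists a function v : List Σ → Bool such that either: (a) v is prefix-monotone (for all finite traces s, t with s a prefix of t, v s = true implies v t = true) and for every infinite trace f, f ∈ P ↔ (∃ n, v (f↾n) = true); or (b) v is prefix-antitone (for all s, t with s a prefix of t, v t = true implies v s = true) and for every infinite trace f, f ∈ P ↔ (∀ n, v (f↾n) = true). -/
import Mathlib


/-- The length-`n` prefix of an infinite trace `f`. -/
def pref {A : Type*} (f : ℕ → A) (n : ℕ) : List A := List.ofFn (fun i : Fin n => f i.1)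

/-- The infinite trace obtained by prepending the finite trace `s` to the infinite trace `f`. -/
def ext {A : Type*} (s : List A) (f : ℕ → A) : ℕ → A :=
  fun n => if h : n < s.length then s.get ⟨n, h⟩ else f (n - s.length)

/-- `s` positively determines `P`. -/
def PosDet {A : Type*} (P : Set (ℕ → A)) (s : List A) : Prop := ∀ f : ℕ → A, ext s f ∈ P

/-- `s` negatively determines `P`. -/
def NegDet {A : Type*} (P : Set (ℕ → A)) (s : List A) : Prop := ∀ f : ℕ → A, ext s f ∉ P

/-- `P` is a safety property. -/
def Safe {A : Type*} (P : Set (ℕ → A)) : Prop :=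
  ∀ f : ℕ → A, f ∉ P → ∃ n : ℕ, NegDet P (pref f n)

/-- `P` is a co-safety property. -/
def CoSafe {A : Type*} (P : Set (ℕ → A)) : Prop :=
  ∀ f : ℕ → A, f ∈ P → ∃ n : ℕ, PosDet P (pref f n)

lemma pref_length {A : Type*} (f : ℕ → A) (n : ℕ) : (pref f n).length = n := by
  simp [pref]

lemma pref_ext {A : Type*} (s : List A) (g : ℕ → A) : pref (ext s g) s.length = s := by
  apply List.ext_getElem
  · simp [pref]
  · intro i h1 h2
    simp only [pref, ext, List.length_ofFn] at h1 ⊢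
    rw [List.getElem_ofFn]
    rw [dif_pos h2]
    rfl

lemma ext_pref_self {A : Type*} (f : ℕ → A) (n : ℕ) :
    ext (pref f n) (fun k => f (k + n)) = f := by
  funext k
  simp only [ext, pref_length]
  split
  · simp [pref]
  · congr 1; omega

lemma ext_append {A : Type*} (s r : List A) (f : ℕ → A) :
    ext (s ++ r) f = ext s (ext r f) := by
  funext n
  simp only [ext, List.length_append, List.get_eq_getElem]
  by_cases h1 : n < s.length
  · rw [dif_pos (by omega), dif_pos h1]
    simp [List.getElem_append, h1]
  · by_cases h2 : n < s.length + r.length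
    · rw [dif_pos h2, dif_neg h1, dif_pos (by omega)]
      simp only [List.getElem_append]
      rw [dif_neg h1]
    · rw [dif_neg h2, dif_neg h1, dif_neg (by omega)]
      congr 1; omega

lemma posDet_mono {A : Type*} {P : Set (ℕ → A)} {s t : List A} (h : s <+: t)
    (hs : PosDet P s) : PosDet P t := by
  obtain ⟨r, rfl⟩ := h
  intro f
  rw [ext_append]
  exact hs _

lemma negDet_mono {A : Type*} {P : Set (ℕ → A)} {s t : List A} (h : s <+: t)
    (hs : NegDet P s) : NegDet P t := by
  obtain ⟨r, rfl⟩ := h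
  intro f
  rw [ext_append]
  exact hs _

lemma pref_ext_pref {A : Type*} (f g : ℕ → A) (n : ℕ) :
    pref (ext (pref f n) g) n = pref f n := by
  have := pref_ext (pref f n) g
  rwa [pref_length] at this

theorem safe_or_cosafe_iff_monotonic_verdict {A : Type*} [Fintype A] [Nonempty A]
    (P : Set (ℕ → A)) :
    (Safe P ∨ CoSafe P) ↔
    (∃ v : List A → Bool,
      ((∀ s t : List A, s <+: t → v s = true → v t = true) ∧
        ∀ f : ℕ → A, f ∈ P ↔ (∃ n : ℕ, v (pref f n) = true)) ∨
      ((∀ s t : List A, s <+: t → v t = true → v s = true) ∧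
        ∀ f : ℕ → A, f ∈ P ↔ (∀ n : ℕ, v (pref f n) = true))) := by
  classical
  constructor
  · rintro (hS | hC)
    · refine ⟨fun s => decide (¬ NegDet P s), Or.inr ⟨?_, ?_⟩⟩
      · intro s t hst hv
        simp only [decide_eq_true_eq] at hv ⊢
        exact fun hns => hv (negDet_mono hst hns)
      · intro f
        constructor
        · intro hf n
          simp only [decide_eq_true_eq]
          intro hneg
          exact hneg (fun k => f (k + n)) (by rwa [ext_pref_self])
        · intro h
          by_contra hf
          obtain ⟨n, hn⟩ := hS f hf
          have := h n
          simp only [decide_eq_true_eq] at this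
          exact this hn
    · refine ⟨fun s => decide (PosDet P s), Or.inl ⟨?_, ?_⟩⟩
      · intro s t hst hv
        simp only [decide_eq_true_eq] at hv ⊢
        exact posDet_mono hst hv
      · intro f
        constructor
        · intro hf
          obtain ⟨n, hn⟩ := hC f hf
          exact ⟨n, by simpa using hn⟩
        · rintro ⟨n, hn⟩
          simp only [decide_eq_true_eq] at hn
          have := hn (fun k => f (k + n))
          rwa [ext_pref_self] at this
  · rintro ⟨v, ⟨hmono, hiff⟩ | ⟨hanti, hiff⟩⟩
    · right
      intro f hf
      obtain ⟨n, hn⟩ := (hiff f).1 hf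
      refine ⟨n, fun g => ?_⟩
      rw [hiff]
      exact ⟨n, by rwa [pref_ext_pref]⟩
    · left
      intro f hf
      have : ¬ ∀ n, v (pref f n) = true := fun h => hf ((hiff f).2 h)
      push_neg at this
      obtain ⟨n, hn⟩ := this
      refine ⟨n, fun g hg => ?_⟩
      have := (hiff _).1 hg n
      rw [pref_ext_pref] at this
      exact hn this
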